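/- arXiv:1510.09216 — 11 statements merged into one kernel-verified Lean document; each statement's English description precedes it below -/
import Mathlib

section
/- For any composable maps X₀ →f₁ X₁ →f₂ X₂ →f₃ X₃ in a triangulated category, the iterated cofiber Toda bracket equals the fiber-cofiber Toda bracket: ⟨f₃, f₂, f₁⟩_cc = ⟨f₃, f₂, f₁⟩_fc as subsets of T(ΣX₀, X₃). -/
open CategoryTheory Category Limits Pretriangulated

variable {C : Type*} [Category C] [Preadditive C] [HasZeroObject C]
  [HasShift C ℤ] [∀ n : ℤ, (shiftFunctor C n).Additive] [Pretriangulated C]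

/-- The fiber-cofiber Toda bracket `⟨f₃, f₂, f₁⟩_fc`: all composites `β ∘ Σα` where,
for a distinguished triangle `F ⟶ X₁ ⟶ X₂ ⟶ ΣF` (so `F = Σ⁻¹C_{f₂}` and `ΣF = C_{f₂}`),
`α : X₀ ⟶ F` lifts `f₁` and `β : ΣF ⟶ X₃` extends `f₃`. -/
def fcBracket {X₀ X₁ X₂ X₃ : C} (f₁ : X₀ ⟶ X₁) (f₂ : X₁ ⟶ X₂) (f₃ : X₂ ⟶ X₃) :
    Set (X₀⟦(1:ℤ)⟧ ⟶ X₃) :=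
  { ψ | ∃ (F : C) (j : F ⟶ X₁) (q : X₂ ⟶ F⟦(1:ℤ)⟧)
      (_ : Triangle.mk j f₂ q ∈ distTriang C)
      (α : X₀ ⟶ F) (β : F⟦(1:ℤ)⟧ ⟶ X₃),
      α ≫ j = f₁ ∧ q ≫ β = f₃ ∧ ψ = α⟦(1:ℤ)⟧' ≫ β }

/-- The iterated cofiber Toda bracket `⟨f₃, f₂, f₁⟩_cc`. -/
def ccBracket {X₀ X₁ X₂ X₃ : C} (f₁ : X₀ ⟶ X₁) (f₂ : X₁ ⟶ X₂) (f₃ : X₂ ⟶ X₃) :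
    Set (X₀⟦(1:ℤ)⟧ ⟶ X₃) :=
  { ψ | ∃ (Cf : C) (q : X₁ ⟶ Cf) (ι : Cf ⟶ X₀⟦(1:ℤ)⟧)
      (_ : Triangle.mk f₁ q ι ∈ distTriang C)
      (φ : Cf ⟶ X₂), q ≫ φ = f₂ ∧ φ ≫ f₃ = ι ≫ ψ }

/-- The iterated fiber Toda bracket `⟨f₃, f₂, f₁⟩_ff`. -/
def ffBracket {X₀ X₁ X₂ X₃ : C} (f₁ : X₀ ⟶ X₁) (f₂ : X₁ ⟶ X₂) (f₃ : X₂ ⟶ X₃) :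
    Set (X₀⟦(1:ℤ)⟧ ⟶ X₃) :=
  { ψ | ∃ (G : C) (j : X₃⟦(-1:ℤ)⟧ ⟶ G) (κ : G ⟶ X₂)
      (_ : Triangle.mk j κ
        (f₃ ≫ (shiftFunctorCompIsoId C (-1:ℤ) (1:ℤ) (neg_add_cancel 1)).inv.app X₃) ∈
          distTriang C)
      (γ : X₁ ⟶ G) (δ : X₀ ⟶ X₃⟦(-1:ℤ)⟧),
      γ ≫ κ = f₂ ∧ f₁ ≫ γ = δ ≫ j ∧
      ψ = δ⟦(1:ℤ)⟧' ≫ (shiftFunctorCompIsoId C (-1:ℤ) (1:ℤ) (neg_add_cancel 1)).hom.app X₃ }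

/-!
Both inclusions come from morphisms of distinguished triangles from the cofiber triangle of `f₁`
to a fiber triangle `F → X₁ → X₂ → ΣF` of `f₂`. Given `α`, completing `(α, 𝟙)` yields `φ`.
Given `φ`, completing `(𝟙, φ)` on the rotated triangles yields `m : ΣX₀ → ΣF`, which is `Σα`
for a lift `α` since `Σ` is an equivalence. The extension `β` with `m ≫ β = ψ` exists because
in a morphism of distinguished triangles invertible on the first objects the second square is a
weak pushout: a first extension of `f₃` is corrected by a map `ΣX₁ → X₃` obtained from the
exactness of `Hom(-, X₃)`.
-/

namespace CategoryTheory.Pretriangulated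

lemma exists_desc_of_isIso_hom₁ {T T' : Triangle C} (e : T ⟶ T') (hT : T ∈ distTriang C)
    (hT' : T' ∈ distTriang C) [IsIso e.hom₁] {X : C} (f : T'.obj₂ ⟶ X) (g : T.obj₃ ⟶ X)
    (hfg : e.hom₂ ≫ f = T.mor₂ ≫ g) :
    ∃ h : T'.obj₃ ⟶ X, T'.mor₂ ≫ h = f ∧ e.hom₃ ≫ h = g := by
  have hf : T'.mor₁ ≫ f = 0 := by
    rw [← cancel_epi e.hom₁, comp_zero, ← reassoc_of% e.comm₁, hfg,
      comp_distTriang_mor_zero₁₂_assoc _ hT, zero_comp]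
  obtain ⟨h₀, rfl⟩ := T'.yoneda_exact₂ hT' f hf
  obtain ⟨ε, hε⟩ := T.yoneda_exact₃ hT (g - e.hom₃ ≫ h₀) (by
    rw [Preadditive.comp_sub, reassoc_of% e.comm₂, hfg, sub_self])
  refine ⟨h₀ + T'.mor₃ ≫ inv (e.hom₁⟦(1 : ℤ)⟧') ≫ ε, ?_, ?_⟩
  · rw [Preadditive.comp_add, comp_distTriang_mor_zero₂₃_assoc _ hT', zero_comp, add_zero]
  · rw [Preadditive.comp_add, ← e.comm₃_assoc, IsIso.hom_inv_id_assoc, ← hε, add_sub_cancel]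

end CategoryTheory.Pretriangulated

lemma fcBracket_subset_ccBracket {X₀ X₁ X₂ X₃ : C} (f₁ : X₀ ⟶ X₁) (f₂ : X₁ ⟶ X₂)
    (f₃ : X₂ ⟶ X₃) : fcBracket f₁ f₂ f₃ ⊆ ccBracket f₁ f₂ f₃ := by
  rintro ψ ⟨F, j, p, hT, α, β, hα, hβ, rfl⟩
  obtain ⟨Cf, q, ι, hT₁⟩ := distinguished_cocone_triangle f₁
  obtain ⟨φ, hφ₁, hφ₂⟩ : ∃ φ : Cf ⟶ X₂, q ≫ φ = 𝟙 X₁ ≫ f₂ ∧ ι ≫ α⟦(1 : ℤ)⟧' = φ ≫ p :=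
    complete_distinguished_triangle_morphism _ _ hT₁ hT α (𝟙 X₁) ((comp_id f₁).trans hα.symm)
  refine ⟨Cf, q, ι, hT₁, φ, by rw [hφ₁, id_comp], ?_⟩
  rw [← hβ, reassoc_of% hφ₂]

lemma ccBracket_subset_fcBracket {X₀ X₁ X₂ X₃ : C} (f₁ : X₀ ⟶ X₁) (f₂ : X₁ ⟶ X₂)
    (f₃ : X₂ ⟶ X₃) : ccBracket f₁ f₂ f₃ ⊆ fcBracket f₁ f₂ f₃ := by
  rintro ψ ⟨Cf, q, ι, hT₁, φ, hφ, hψ⟩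
  obtain ⟨F, j, p, hT₂⟩ := distinguished_cocone_triangle₁ f₂
  have hφ' : q ≫ φ = 𝟙 X₁ ≫ f₂ := hφ.trans (id_comp f₂).symm
  obtain ⟨m, hm₂, hm₃⟩ : ∃ m : X₀⟦(1 : ℤ)⟧ ⟶ F⟦(1 : ℤ)⟧,
      ι ≫ m = φ ≫ p ∧ (-f₁⟦(1 : ℤ)⟧') ≫ (𝟙 X₁)⟦(1 : ℤ)⟧' = m ≫ (-j⟦(1 : ℤ)⟧') :=
    complete_distinguished_triangle_morphism _ _ (rot_of_distTriang _ hT₁)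
      (rot_of_distTriang _ hT₂) (𝟙 X₁) φ hφ'
  let e : (Triangle.mk f₁ q ι).rotate ⟶ (Triangle.mk j f₂ p).rotate :=
    Triangle.homMk _ _ (𝟙 X₁) φ m hφ' hm₂ hm₃
  have : IsIso e.hom₁ := inferInstanceAs (IsIso (𝟙 X₁))
  obtain ⟨β, hβ, hmβ⟩ := exists_desc_of_isIso_hom₁ e (rot_of_distTriang _ hT₁)
    (rot_of_distTriang _ hT₂) f₃ ψ hψ
  refine ⟨F, j, p, hT₂, (shiftFunctor C (1 : ℤ)).preimage m, β, ?_, hβ, ?_⟩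
  · apply (shiftFunctor C (1 : ℤ)).map_injective
    simpa using hm₃.symm
  · rw [Functor.map_preimage]
    exact hmβ.symm

/-- The iterated cofiber Toda bracket equals the fiber-cofiber Toda bracket:
`⟨f₃, f₂, f₁⟩_cc = ⟨f₃, f₂, f₁⟩_fc` as subsets of `T(ΣX₀, X₃)`. -/
theorem ccBracket_eq_fcBracket {X₀ X₁ X₂ X₃ : C}
    (f₁ : X₀ ⟶ X₁) (f₂ : X₁ ⟶ X₂) (f₃ : X₂ ⟶ X₃) :
    ccBracket f₁ f₂ f₃ = fcBracket f₁ f₂ f₃ :=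
  (ccBracket_subset_fcBracket f₁ f₂ f₃).antisymm (fcBracket_subset_ccBracket f₁ f₂ f₃)
end

section
/- For any composable maps X₀ →f₁ X₁ →f₂ X₂ →f₃ X₃ in a triangulated category, the fiber-cofiber Toda bracket equals the iterated fiber Toda bracket: ⟨f₃, f₂, f₁⟩_fc = ⟨f₃, f₂, f₁⟩_ff as subsets of T(ΣX₀, X₃). -/
open CategoryTheory Category Limits Pretriangulated

variable {C : Type*} [Category C] [Preadditive C] [HasZeroObject C]
  [HasShift C ℤ] [∀ n : ℤ, (shiftFunctor C n).Additive] [Pretriangulated C]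

/-!
Both brackets are parametrised by morphisms of distinguished triangles
`(a, γ, 𝟙) : (F ⟶ X₁ ⟶ X₂ ⟶ ΣF) ⟶ (Σ⁻¹X₃ ⟶ G ⟶ X₂ ⟶ X₃)` which are the identity on `X₂`:
an extension `β` of `f₃` corresponds to `a = Σ⁻¹β`, and `γ` is the lift of `f₂`.
An fc-datum `α` gives the ff-datum `δ = α ≫ a`. Conversely, a morphism of distinguished
triangles that is invertible on the third vertex has a weakly cartesian first square, so the
compatible pair `(f₁, δ)` comes from some `α` with `α ≫ j = f₁` and `α ≫ a = δ`.
-/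

theorem exists_lift_of_isIso_hom₃ {T T' : Triangle C} (hT : T ∈ distTriang C)
    (hT' : T' ∈ distTriang C) (φ : T ⟶ T') [IsIso φ.hom₃] {X : C} (z : X ⟶ T.obj₂)
    (y : X ⟶ T'.obj₁) (h : z ≫ φ.hom₂ = y ≫ T'.mor₁) :
    ∃ x : X ⟶ T.obj₁, x ≫ T.mor₁ = z ∧ x ≫ φ.hom₁ = y := by
  have hz : z ≫ T.mor₂ = 0 := by
    rw [← cancel_mono φ.hom₃, assoc, φ.comm₂, reassoc_of% h,
      comp_distTriang_mor_zero₁₂ _ hT', comp_zero, zero_comp]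
  obtain ⟨x₀, rfl⟩ := Triangle.coyoneda_exact₂ T hT z hz
  have hdiff : (x₀ ≫ φ.hom₁ - y) ≫ T'.mor₁ = 0 := by
    rw [Preadditive.sub_comp, assoc, ← φ.comm₁, ← assoc, h, sub_self]
  -- `m` and `m'` are the first morphisms of `T.invRotate` and `T'.invRotate`; naming them
  -- replaces their types by ones that `rw` can match.
  obtain ⟨m, m', hm, ⟨ε, hε⟩, hmm'⟩ : ∃ (m : T.obj₃⟦(-1:ℤ)⟧ ⟶ T.obj₁)
      (m' : T'.obj₃⟦(-1:ℤ)⟧ ⟶ T'.obj₁), m ≫ T.mor₁ = 0 ∧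
      (∃ ε : X ⟶ T'.obj₃⟦(-1:ℤ)⟧, x₀ ≫ φ.hom₁ - y = ε ≫ m') ∧
      m ≫ φ.hom₁ = φ.hom₃⟦(-1:ℤ)⟧' ≫ m' :=
    ⟨_, _, comp_distTriang_mor_zero₁₂ _ (inv_rot_of_distTriang _ hT),
      Triangle.coyoneda_exact₂ _ (inv_rot_of_distTriang _ hT') _ hdiff,
      ((invRotate C).map φ).comm₁⟩
  refine ⟨x₀ - ε ≫ (inv φ.hom₃)⟦(-1:ℤ)⟧' ≫ m, ?_, ?_⟩
  · rw [Preadditive.sub_comp, assoc, assoc, hm, comp_zero, comp_zero, sub_zero]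
  · rw [Preadditive.sub_comp, assoc, assoc, hmm', ← Functor.map_comp_assoc, IsIso.inv_hom_id,
      CategoryTheory.Functor.map_id, id_comp, ← hε, sub_sub_cancel]

section

variable {X₀ X₁ X₂ X₃ : C} (f₁ : X₀ ⟶ X₁) (f₂ : X₁ ⟶ X₂) (f₃ : X₂ ⟶ X₃)

theorem fcBracket_subset_ffBracket : fcBracket f₁ f₂ f₃ ⊆ ffBracket f₁ f₂ f₃ := by
  let e := shiftFunctorCompIsoId C (-1:ℤ) (1:ℤ) (neg_add_cancel 1)
  rintro _ ⟨F, j, q, hT, α, β, hα, hβ, rfl⟩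
  obtain ⟨G, j', κ, hT'⟩ := distinguished_cocone_triangle₂ (f₃ ≫ e.inv.app X₃)
  obtain ⟨a, rfl⟩ : ∃ a : F ⟶ X₃⟦(-1:ℤ)⟧, a⟦(1:ℤ)⟧' ≫ e.hom.app X₃ = β :=
    ⟨(shiftFunctor C (1:ℤ)).preimage (β ≫ e.inv.app X₃), by simp⟩
  have hqa : q ≫ a⟦(1:ℤ)⟧' = 𝟙 X₂ ≫ f₃ ≫ e.inv.app X₃ := by simp [← hβ]
  obtain ⟨γ, hjγ, hγκ⟩ : ∃ γ : X₁ ⟶ G, j ≫ γ = a ≫ j' ∧ f₂ ≫ 𝟙 X₂ = γ ≫ κ :=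
    complete_distinguished_triangle_morphism₂ _ _ hT hT' a (𝟙 X₂) hqa
  exact ⟨G, j', κ, hT', γ, α ≫ a, by rw [← hγκ, comp_id], by rw [← hα, assoc, hjγ, assoc],
    by rw [Functor.map_comp, assoc]⟩

theorem ffBracket_subset_fcBracket : ffBracket f₁ f₂ f₃ ⊆ fcBracket f₁ f₂ f₃ := by
  let e := shiftFunctorCompIsoId C (-1:ℤ) (1:ℤ) (neg_add_cancel 1)
  rintro _ ⟨G, j', κ, hT', γ, δ, hγκ, hδ, rfl⟩
  obtain ⟨F, j, q, hT⟩ := distinguished_cocone_triangle₁ f₂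
  have hfγ : f₂ ≫ 𝟙 X₂ = γ ≫ κ := by rw [comp_id, hγκ]
  obtain ⟨a, hja, hqa⟩ : ∃ a : F ⟶ X₃⟦(-1:ℤ)⟧,
      j ≫ γ = a ≫ j' ∧ q ≫ a⟦(1:ℤ)⟧' = 𝟙 X₂ ≫ f₃ ≫ e.inv.app X₃ :=
    complete_distinguished_triangle_morphism₁ _ _ hT hT' γ (𝟙 X₂) hfγ
  let φ := Triangle.homMk (Triangle.mk j f₂ q) (Triangle.mk j' κ (f₃ ≫ e.inv.app X₃))
    a γ (𝟙 X₂) hja hfγ hqa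
  have : IsIso φ.hom₃ := inferInstanceAs (IsIso (𝟙 X₂))
  obtain ⟨α, hα, rfl⟩ : ∃ α : X₀ ⟶ F, α ≫ j = f₁ ∧ α ≫ a = δ :=
    exists_lift_of_isIso_hom₃ hT hT' φ f₁ δ hδ
  exact ⟨F, j, q, hT, α, a⟦(1:ℤ)⟧' ≫ e.hom.app X₃, hα, by simp [reassoc_of% hqa],
    by rw [Functor.map_comp, assoc]⟩

end

/-- The fiber-cofiber Toda bracket equals the iterated fiber Toda bracket:
`⟨f₃, f₂, f₁⟩_fc = ⟨f₃, f₂, f₁⟩_ff` as subsets of `T(ΣX₀, X₃)`. -/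
theorem fcBracket_eq_ffBracket {X₀ X₁ X₂ X₃ : C}
    (f₁ : X₀ ⟶ X₁) (f₂ : X₁ ⟶ X₂) (f₃ : X₂ ⟶ X₃) :
    fcBracket f₁ f₂ f₃ = ffBracket f₁ f₂ f₃ :=
  (fcBracket_subset_ffBracket f₁ f₂ f₃).antisymm (ffBracket_subset_fcBracket f₁ f₂ f₃)
end

section
/- For composable maps X₀ →f₁ X₁ →f₂ X₂ →f₃ X₃ →f₄ X₄ in a triangulated category, one has the inclusion ⟨f₄, f₃, f₂⟩ ∘ f₁ ⊆ ⟨f₄, f₃, f₂ ∘ f₁⟩ of subsets of T(ΣX₀, X₄), where the left-hand side is the set of composites ψ ∘ Σf₁ for ψ ∈ ⟨f₄, f₃, f₂⟩ ⊆ T(ΣX₁, X₄). -/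
open CategoryTheory Category Limits Pretriangulated

variable {C : Type*} [Category C] [Preadditive C] [HasZeroObject C]
  [HasShift C ℤ] [∀ n : ℤ, (shiftFunctor C n).Additive] [Pretriangulated C]

/-- `⟨f₄, f₃, f₂⟩ ∘ f₁ ⊆ ⟨f₄, f₃, f₂ ∘ f₁⟩` as subsets of `T(ΣX₀, X₄)`,
where the left-hand side is the set of composites `ψ ∘ Σf₁` for
`ψ ∈ ⟨f₄, f₃, f₂⟩ ⊆ T(ΣX₁, X₄)`. -/
theorem todaBracket_comp_subset {X₀ X₁ X₂ X₃ X₄ : C}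
    (f₁ : X₀ ⟶ X₁) (f₂ : X₁ ⟶ X₂) (f₃ : X₂ ⟶ X₃) (f₄ : X₃ ⟶ X₄) :
    (fun ψ => f₁⟦(1:ℤ)⟧' ≫ ψ) '' fcBracket f₂ f₃ f₄ ⊆ fcBracket (f₁ ≫ f₂) f₃ f₄ := by
  rintro ψ ⟨φ, ⟨F, j, q, hT, α, β, hα, hβ, rfl⟩, rfl⟩
  exact ⟨F, j, q, hT, f₁ ≫ α, β, by rw [assoc, hα], hβ, by simp⟩
end

section
/- For composable maps X₀ →f₁ X₁ →f₂ X₂ →f₃ X₃ →f₄ X₄ in a triangulated category, one has the inclusion ⟨f₄ ∘ f₃, f₂, f₁⟩ ⊆ ⟨f₄, f₃ ∘ f₂, f₁⟩ of subsets of T(ΣX₀, X₄). -/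
open CategoryTheory Category Limits Pretriangulated

variable {C : Type*} [Category C] [Preadditive C] [HasZeroObject C]
  [HasShift C ℤ] [∀ n : ℤ, (shiftFunctor C n).Additive] [Pretriangulated C]

/-- `⟨f₄ ∘ f₃, f₂, f₁⟩ ⊆ ⟨f₄, f₃ ∘ f₂, f₁⟩` as subsets of `T(ΣX₀, X₄)`,
using the iterated cofiber description of the Toda bracket. -/
theorem todaBracket_shift_comp_left {X₀ X₁ X₂ X₃ X₄ : C}
    (f₁ : X₀ ⟶ X₁) (f₂ : X₁ ⟶ X₂) (f₃ : X₂ ⟶ X₃) (f₄ : X₃ ⟶ X₄) :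
    ccBracket f₁ f₂ (f₃ ≫ f₄) ⊆ ccBracket f₁ (f₂ ≫ f₃) f₄ := by
  rintro ψ ⟨Cf, q, ι, hT, φ, h1, h2⟩
  exact ⟨Cf, q, ι, hT, φ ≫ f₃, by rw [← assoc, h1], by rw [assoc, h2]⟩
end

section
/- For composable maps X₀ →f₁ X₁ →f₂ X₂ →f₃ X₃ →f₄ X₄ in a triangulated category, one has the inclusion ⟨f₄, f₃, f₂ ∘ f₁⟩ ⊆ ⟨f₄, f₃ ∘ f₂, f₁⟩ of subsets of T(ΣX₀, X₄). -/
open CategoryTheory Category Limits Pretriangulated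

variable {C : Type*} [Category C] [Preadditive C] [HasZeroObject C]
  [HasShift C ℤ] [∀ n : ℤ, (shiftFunctor C n).Additive] [Pretriangulated C]

/-- `⟨f₄, f₃, f₂ ∘ f₁⟩ ⊆ ⟨f₄, f₃ ∘ f₂, f₁⟩` as subsets of `T(ΣX₀, X₄)`,
using the iterated fiber description of the Toda bracket. -/
theorem todaBracket_shift_comp_right {X₀ X₁ X₂ X₃ X₄ : C}
    (f₁ : X₀ ⟶ X₁) (f₂ : X₁ ⟶ X₂) (f₃ : X₂ ⟶ X₃) (f₄ : X₃ ⟶ X₄) :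
    ffBracket (f₁ ≫ f₂) f₃ f₄ ⊆ ffBracket f₁ (f₂ ≫ f₃) f₄ := by
  rintro ψ ⟨G, j, κ, hT, γ, δ, hγκ, hcomm, hψ⟩
  exact ⟨G, j, κ, hT, f₂ ≫ γ, δ, by rw [Category.assoc, hγκ],
    by rw [← Category.assoc, hcomm], hψ⟩
end

section
/- There exist a triangulated category T, objects X, Y, Z and maps such that the inclusion ⟨f₄f₃, f₂, f₁⟩ ⊆ ⟨f₄, f₃f₂, f₁⟩ is proper: for the sequence X →0 Y →1 Y →0 Z →1 Z, one has ⟨1_Z ∘ 0, 1_Y, 0⟩ = {0} while ⟨1_Z, 0 ∘ 1_Y, 0⟩ = T(ΣX, Z). In particular, ⟨0, 1_Y, 0⟩ = {0} and ⟨1_Z, 0, 0⟩ = T(ΣX, Z) for any objects X, Y, Z of any triangulated category. -/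
/-!
If `f₂` is an isomorphism, its fiber `F` is zero, so every element `Σα ≫ β` of the bracket
vanishes. If `f₂ = 0`, the map `q : X₂ ⟶ ΣF` of the fiber triangle is a split monomorphism
with retraction `r`, and `q ≫ Σj = 0`; so for any `ψ : ΣX₀ ⟶ X₂` the map `ψ ≫ q` desuspends
to a lift `α` of `0`, and `β = r ≫ f₃` extends `f₃`, giving `ψ ≫ f₃` in the bracket.
-/

open CategoryTheory Category Limits Pretriangulated

variable {C : Type*} [Category C] [Preadditive C] [HasZeroObject C]
  [HasShift C ℤ] [∀ n : ℤ, (shiftFunctor C n).Additive] [Pretriangulated C]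

theorem zero_mem_fcBracket {X₀ X₁ X₂ X₃ : C} (f₂ : X₁ ⟶ X₂) :
    (0 : X₀⟦(1:ℤ)⟧ ⟶ X₃) ∈ fcBracket (0 : X₀ ⟶ X₁) f₂ (0 : X₂ ⟶ X₃) := by
  obtain ⟨F, j, q, hT⟩ := distinguished_cocone_triangle₁ f₂
  exact ⟨F, j, q, hT, 0, 0, zero_comp, comp_zero, comp_zero.symm⟩

theorem fcBracket_subset_zero_of_isIso {X₀ X₁ X₂ X₃ : C} (f₁ : X₀ ⟶ X₁) (f₂ : X₁ ⟶ X₂)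
    [IsIso f₂] (f₃ : X₂ ⟶ X₃) : fcBracket f₁ f₂ f₃ ⊆ {0} := by
  rintro ψ ⟨F, j, q, hT, α, β, -, -, rfl⟩
  have hF : IsZero F := (Triangle.isZero₁_iff_isIso₂ _ hT).2 ‹_›
  rw [hF.eq_of_tgt α 0, Functor.map_zero, zero_comp]
  rfl

theorem comp_mem_fcBracket_zero_zero {X₀ X₁ X₂ X₃ : C} (ψ : X₀⟦(1:ℤ)⟧ ⟶ X₂) (f₃ : X₂ ⟶ X₃) :
    ψ ≫ f₃ ∈ fcBracket (0 : X₀ ⟶ X₁) (0 : X₁ ⟶ X₂) f₃ := by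
  obtain ⟨F, j, q, hT⟩ := distinguished_cocone_triangle₁ (0 : X₁ ⟶ X₂)
  obtain ⟨r, hr⟩ : ∃ r : F⟦(1:ℤ)⟧ ⟶ X₂, 𝟙 X₂ = q ≫ r :=
    Triangle.yoneda_exact₃ _ hT (𝟙 X₂) zero_comp
  have hqj : q ≫ j⟦(1:ℤ)⟧' = 0 := comp_distTriang_mor_zero₃₁ _ hT
  let α : X₀ ⟶ F := (shiftFunctor C (1:ℤ)).preimage (ψ ≫ q)
  have hα : α⟦(1:ℤ)⟧' = ψ ≫ q := Functor.map_preimage _ _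
  refine ⟨F, j, q, hT, α, r ≫ f₃, ?_, ?_, ?_⟩
  · apply (shiftFunctor C (1:ℤ)).map_injective
    rw [Functor.map_comp, hα, assoc, hqj, comp_zero, Functor.map_zero]
  · rw [← assoc, ← hr, id_comp]
  · rw [hα, assoc, ← assoc q, ← hr, id_comp]

theorem fcBracket_zero_id_zero (X Y Z : C) :
    fcBracket (0 : X ⟶ Y) (𝟙 Y) (0 : Y ⟶ Z) = {0} :=
  (fcBracket_subset_zero_of_isIso _ _ _).antisymm
    (Set.singleton_subset_iff.2 (zero_mem_fcBracket _))

theorem fcBracket_zero_zero_id (X Y Z : C) :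
    fcBracket (0 : X ⟶ Y) (0 : Y ⟶ Z) (𝟙 Z) = Set.univ :=
  Set.eq_univ_of_forall fun ψ => comp_id ψ ▸ comp_mem_fcBracket_zero_zero ψ (𝟙 Z)

/-- For the sequence `X →0 Y →1 Y →0 Z →1 Z` one has `⟨1_Z ∘ 0, 1_Y, 0⟩ = ⟨0, 1_Y, 0⟩ = {0}`
while `⟨1_Z, 0 ∘ 1_Y, 0⟩ = ⟨1_Z, 0, 0⟩ = T(ΣX, Z)`; in particular, whenever `T(ΣX, Z)` has a
nonzero element, the inclusion `⟨f₄f₃, f₂, f₁⟩ ⊆ ⟨f₄, f₃f₂, f₁⟩` is proper. -/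
theorem todaBracket_inclusion_proper (X Y Z : C) :
    fcBracket (0 : X ⟶ Y) (𝟙 Y) (0 : Y ⟶ Z) = {0} ∧
    fcBracket (0 : X ⟶ Y) (0 : Y ⟶ Z) (𝟙 Z) = Set.univ ∧
    ((∃ ψ : X⟦(1:ℤ)⟧ ⟶ Z, ψ ≠ 0) →
      fcBracket (0 : X ⟶ Y) (𝟙 Y) (0 : Y ⟶ Z) ⊂
        fcBracket (0 : X ⟶ Y) (0 : Y ⟶ Z) (𝟙 Z)) := by
  refine ⟨fcBracket_zero_id_zero X Y Z, fcBracket_zero_zero_id X Y Z, ?_⟩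
  rintro ⟨ψ, hψ⟩
  rw [fcBracket_zero_id_zero, fcBracket_zero_zero_id]
  exact Set.ssubset_univ_iff.2 fun h => hψ ((Set.ext_iff.1 h ψ).2 trivial)
end

section
/- Let T be a triangulated category and X →f Y →g Z →h ΣX a triangle. Then this triangle is distinguished if and only if (1) for every object A the sequence T(A,Σ⁻¹Z) → T(A,X) → T(A,Y) → T(A,Z) → T(A,ΣX) induced by Σ⁻¹h, f, g, h is exact, and (2) the three-fold Toda bracket ⟨h, g, f⟩ ⊆ T(ΣX, ΣX) contains the identity 1_{ΣX}. -/
open CategoryTheory Category Limits Pretriangulated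

variable {C : Type*} [Category C] [Preadditive C] [HasZeroObject C]
  [HasShift C ℤ] [∀ n : ℤ, (shiftFunctor C n).Additive] [Pretriangulated C]

/-! A distinguished triangle gives long exact `Hom(A, -)`-sequences, and it is itself a witness
for `𝟙 ∈ ⟨h, g, f⟩`. Conversely, a witness for `𝟙 ∈ ⟨h, g, f⟩` is a distinguished triangle
`X → Y → K → ΣX` on `f` together with a map `φ : K → Z` making a morphism of triangles that is
the identity on `X` and `Y`. Exactness of the given sequence at `Y` and `Z`, together with
`h ≫ Σf = 0` (exactness at `X`), makes `Hom(A, φ)` bijective by a four-lemma chase, so `φ` is an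
isomorphism and the given triangle is distinguished. -/

def CoyonedaExact {D : Type*} [Category D] [HasZeroMorphisms D] (A : D) {X Y Z : D}
    (f : X ⟶ Y) (g : Y ⟶ Z) : Prop :=
  ∀ u : A ⟶ Y, u ≫ g = 0 ↔ ∃ v : A ⟶ X, v ≫ f = u

theorem CoyonedaExact.of_neg_left {D : Type*} [Category D] [Preadditive D] {A X Y Z : D}
    {f : X ⟶ Y} {g : Y ⟶ Z} (hfg : CoyonedaExact A (-f) g) : CoyonedaExact A f g := by
  intro u
  rw [hfg u]
  constructor <;> rintro ⟨v, rfl⟩ <;> exact ⟨-v, by simp⟩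

theorem comp_shift_map_eq_zero_of_comp_eq_zero {D : Type*} [Category D] [Preadditive D]
    [HasShift D ℤ] [∀ n : ℤ, (shiftFunctor D n).Additive] {X Y Z : D} {f : X ⟶ Y}
    {h : Z ⟶ X⟦(1:ℤ)⟧}
    (hhf : (h⟦(-1:ℤ)⟧' ≫
      (shiftFunctorCompIsoId D (1:ℤ) (-1:ℤ) (add_neg_cancel 1)).hom.app X) ≫ f = 0) :
    h ≫ f⟦(1:ℤ)⟧' = 0 := by
  rw [← (shiftFunctor D (-1:ℤ)).map_eq_zero_iff, ← cancel_mono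
    ((shiftFunctorCompIsoId D (1:ℤ) (-1:ℤ) (add_neg_cancel 1)).hom.app Y), zero_comp,
    Functor.map_comp, assoc]
  have hnat := (shiftFunctorCompIsoId D (1:ℤ) (-1:ℤ) (add_neg_cancel 1)).hom.naturality f
  dsimp at hnat
  rwa [hnat, ← assoc]

theorem id_mem_ccBracket {X Y Z : C} {f : X ⟶ Y} {g : Y ⟶ Z} {h : Z ⟶ X⟦(1:ℤ)⟧}
    (hT : Triangle.mk f g h ∈ distTriang C) : 𝟙 (X⟦(1:ℤ)⟧) ∈ ccBracket f g h :=
  ⟨Z, g, h, hT, 𝟙 Z, comp_id g, by rw [id_comp, comp_id]⟩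

section

variable {T : Triangle C} {Z : C} {g : T.obj₂ ⟶ Z} {h : Z ⟶ T.obj₁⟦(1:ℤ)⟧} {φ : T.obj₃ ⟶ Z}

theorem coyonedaExact_mor₁_mor₂ (hT : T ∈ distTriang C) (A : C) :
    CoyonedaExact A T.mor₁ T.mor₂ := fun u =>
  ⟨fun hu => (Triangle.coyoneda_exact₂ T hT u hu).imp fun _ hv => hv.symm,
    by rintro ⟨v, rfl⟩; rw [assoc, comp_distTriang_mor_zero₁₂ T hT, comp_zero]⟩

theorem coyonedaExact_mor₂_mor₃ (hT : T ∈ distTriang C) (A : C) :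
    CoyonedaExact A T.mor₂ T.mor₃ :=
  coyonedaExact_mor₁_mor₂ (rot_of_distTriang T hT) A

theorem coyonedaExact_shift_mor₃_mor₁ (hT : T ∈ distTriang C) (A : C) :
    CoyonedaExact A
      (T.mor₃⟦(-1:ℤ)⟧' ≫ (shiftFunctorCompIsoId C (1:ℤ) (-1:ℤ) (add_neg_cancel 1)).hom.app _)
      T.mor₁ :=
  (coyonedaExact_mor₁_mor₂ (inv_rot_of_distTriang T hT) A).of_neg_left

theorem exists_comp_eq_of_coyonedaExact (hT : T ∈ distTriang C) (hq : T.mor₂ ≫ φ = g)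
    (hι : φ ≫ h = T.mor₃) (hhf : h ≫ T.mor₁⟦(1:ℤ)⟧' = 0) {A : C} (hgh : CoyonedaExact A g h)
    (w : A ⟶ Z) : ∃ s : A ⟶ T.obj₃, s ≫ φ = w := by
  obtain ⟨s, hs⟩ := Triangle.coyoneda_exact₁ T hT (w ≫ h) (by rw [assoc, hhf, comp_zero])
  obtain ⟨v, hv⟩ := (hgh (w - s ≫ φ)).1 (by rw [Preadditive.sub_comp, assoc, hι, hs, sub_self])
  exact ⟨s + v ≫ T.mor₂, by rw [Preadditive.add_comp, assoc, hq, hv, add_sub_cancel]⟩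

theorem eq_zero_of_comp_eq_zero_of_coyonedaExact (hT : T ∈ distTriang C)
    (hq : T.mor₂ ≫ φ = g) (hι : φ ≫ h = T.mor₃) {A : C} (hfg : CoyonedaExact A T.mor₁ g)
    {s : A ⟶ T.obj₃} (hs : s ≫ φ = 0) : s = 0 := by
  obtain ⟨v, rfl⟩ := Triangle.coyoneda_exact₃ T hT s (by rw [← hι, reassoc_of% hs, zero_comp])
  obtain ⟨u, rfl⟩ := (hfg v).1 (by rw [← hq, ← assoc, hs])
  rw [assoc, comp_distTriang_mor_zero₁₂ T hT, comp_zero]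

theorem isIso_of_coyonedaExact (hT : T ∈ distTriang C) (hq : T.mor₂ ≫ φ = g)
    (hι : φ ≫ h = T.mor₃) (hhf : h ≫ T.mor₁⟦(1:ℤ)⟧' = 0)
    (hfg : ∀ A, CoyonedaExact A T.mor₁ g) (hgh : ∀ A, CoyonedaExact A g h) : IsIso φ := by
  refine isIso_of_yoneda_map_bijective φ fun A => ⟨fun s₁ s₂ hs => ?_,
    exists_comp_eq_of_coyonedaExact hT hq hι hhf (hgh A)⟩
  rw [← sub_eq_zero]
  exact eq_zero_of_comp_eq_zero_of_coyonedaExact hT hq hι (hfg A)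
    (by rw [Preadditive.sub_comp]; exact sub_eq_zero.2 hs)

theorem mem_distTriang_of_isIso (hT : T ∈ distTriang C) (hq : T.mor₂ ≫ φ = g)
    (hι : φ ≫ h = T.mor₃) (hφ : IsIso φ) : Triangle.mk T.mor₁ g h ∈ distTriang C := by
  refine isomorphic_distinguished T hT _ <|
    Triangle.isoMk _ _ (Iso.refl _) (Iso.refl _) (asIso φ).symm ?_ ?_ ?_ <;>
  · dsimp only [Triangle.mk]
    simp [← hq, ← hι]

end

/-- Heller's criterion: a triangle `X →f Y →g Z →h ΣX` is distinguished if and only if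
(1) for every object `A` the sequence
`T(A, Σ⁻¹Z) → T(A, X) → T(A, Y) → T(A, Z) → T(A, ΣX)` is exact, and
(2) the Toda bracket `⟨h, g, f⟩ ⊆ T(ΣX, ΣX)` contains the identity of `ΣX`. -/
theorem distinguished_iff_exact_and_id_mem_todaBracket {X Y Z : C}
    (f : X ⟶ Y) (g : Y ⟶ Z) (h : Z ⟶ X⟦(1:ℤ)⟧) :
    (Triangle.mk f g h ∈ distTriang C) ↔
      ((∀ A : C,
        (∀ u : A ⟶ X, u ≫ f = 0 ↔ ∃ v : A ⟶ Z⟦(-1:ℤ)⟧,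
          v ≫ (h⟦(-1:ℤ)⟧' ≫
            (shiftFunctorCompIsoId C (1:ℤ) (-1:ℤ) (add_neg_cancel 1)).hom.app X) = u) ∧
        (∀ u : A ⟶ Y, u ≫ g = 0 ↔ ∃ v : A ⟶ X, v ≫ f = u) ∧
        (∀ u : A ⟶ Z, u ≫ h = 0 ↔ ∃ v : A ⟶ Y, v ≫ g = u)) ∧
      𝟙 (X⟦(1:ℤ)⟧) ∈ ccBracket f g h) := by
  constructor
  · intro hT
    exact ⟨fun A => ⟨coyonedaExact_shift_mor₃_mor₁ hT A, coyonedaExact_mor₁_mor₂ hT A,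
      coyonedaExact_mor₂_mor₃ hT A⟩, id_mem_ccBracket hT⟩
  · rintro ⟨hexact, K, q, ι, hT, φ, hq, hι⟩
    rw [comp_id] at hι
    have hhf : h ≫ f⟦(1:ℤ)⟧' = 0 :=
      comp_shift_map_eq_zero_of_comp_eq_zero (((hexact _).1 _).2 ⟨𝟙 _, id_comp _⟩)
    exact mem_distTriang_of_isIso hT hq hι <|
      isIso_of_coyonedaExact hT hq hι hhf (fun A => (hexact A).2.1) (fun A => (hexact A).2.2)
end

section
/- Let T be a triangulated category, Σf₃, Σf₂, Σf₁ the suspensions of composable maps X₀ →f₁ X₁ →f₂ X₂ →f₃ X₃. Then the three-fold Toda bracket satisfies ⟨Σf₃, Σf₂, Σf₁⟩ = −Σ⟨f₃, f₂, f₁⟩ as subsets of T(Σ²X₀, ΣX₃); i.e., ψ ∈ ⟨f₃,f₂,f₁⟩ if and only if −Σψ ∈ ⟨Σf₃, Σf₂, Σf₁⟩. -/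
/-!
Both brackets can be computed from a single distinguished triangle `F ⟶ X₁ ⟶ X₂ ⟶ F⟦1⟧`
on `f₂`, because any two such triangles are isomorphic over `f₂`. Shifting it gives the
distinguished triangle `F⟦1⟧ ⟶ X₁⟦1⟧ ⟶ X₂⟦1⟧ ⟶ F⟦1⟧⟦1⟧` on `f₂⟦1⟧` only once the connecting map
is negated, so the extension of `f₃⟦1⟧` through it is `-β⟦1⟧` rather than `β⟦1⟧`: this is the
sign. Since the shift is fully faithful, every lift and extension for the shifted maps arises
this way, which gives the converse.
-/

open CategoryTheory Category Limits Pretriangulated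

variable {C : Type*} [Category C] [Preadditive C] [HasZeroObject C]
  [HasShift C ℤ] [∀ n : ℤ, (shiftFunctor C n).Additive] [Pretriangulated C]

namespace CategoryTheory.Pretriangulated

lemma mk_shift_distinguished (T : Triangle C) (hT : T ∈ distTriang C) :
    Triangle.mk (T.mor₁⟦(1:ℤ)⟧') (T.mor₂⟦(1:ℤ)⟧') (-(T.mor₃⟦(1:ℤ)⟧')) ∈ distTriang C := by
  refine isomorphic_distinguished _
    (rot_of_distTriang _ (rot_of_distTriang _ (rot_of_distTriang _ hT))) _
    (Triangle.isoMk _ _ (Iso.refl _) (-(Iso.refl _)) (Iso.refl _) ?_ ?_ ?_)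
  · show T.mor₁⟦(1:ℤ)⟧' ≫ (-𝟙 _) = 𝟙 _ ≫ (-(T.mor₁⟦(1:ℤ)⟧'))
    simp
  · show T.mor₂⟦(1:ℤ)⟧' ≫ 𝟙 _ = (-𝟙 _) ≫ (-(T.mor₂⟦(1:ℤ)⟧'))
    simp
  · show (-(T.mor₃⟦(1:ℤ)⟧')) ≫ (𝟙 _)⟦(1:ℤ)⟧' = 𝟙 _ ≫ (-(T.mor₃⟦(1:ℤ)⟧'))
    simp

lemma exists_iso_of_distinguished_mor₂ {F F' X Y : C} {f : X ⟶ Y} {j : F ⟶ X}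
    {q : Y ⟶ F⟦(1:ℤ)⟧} {j' : F' ⟶ X} {q' : Y ⟶ F'⟦(1:ℤ)⟧}
    (hT : Triangle.mk j f q ∈ distTriang C) (hT' : Triangle.mk j' f q' ∈ distTriang C) :
    ∃ e : F ≅ F', e.hom ≫ j' = j ∧ q ≫ e.hom⟦(1:ℤ)⟧' = q' := by
  have hf : f ≫ 𝟙 Y = 𝟙 X ≫ f := (comp_id f).trans (id_comp f).symm
  obtain ⟨a, ha₁, ha₃⟩ : ∃ a : F ⟶ F', j ≫ 𝟙 X = a ≫ j' ∧ q ≫ a⟦(1:ℤ)⟧' = 𝟙 Y ≫ q' :=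
    complete_distinguished_triangle_morphism₁ _ _ hT hT' (𝟙 X) (𝟙 Y) hf
  have : IsIso a := isIso₁_of_isIso₂₃ (T := Triangle.mk j f q) (T' := Triangle.mk j' f q')
    (Triangle.homMk _ _ a (𝟙 X) (𝟙 Y) ha₁ hf ha₃) hT hT' (IsIso.id X) (IsIso.id Y)
  exact ⟨asIso a, ha₁.symm.trans (comp_id j), ha₃.trans (id_comp q')⟩

end CategoryTheory.Pretriangulated

lemma mem_fcBracket_iff_of_distinguished {X₀ X₁ X₂ X₃ F : C} {f₁ : X₀ ⟶ X₁} {f₂ : X₁ ⟶ X₂}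
    {f₃ : X₂ ⟶ X₃} {j : F ⟶ X₁} {q : X₂ ⟶ F⟦(1:ℤ)⟧} (hT : Triangle.mk j f₂ q ∈ distTriang C)
    (ψ : X₀⟦(1:ℤ)⟧ ⟶ X₃) :
    ψ ∈ fcBracket f₁ f₂ f₃ ↔
      ∃ (α : X₀ ⟶ F) (β : F⟦(1:ℤ)⟧ ⟶ X₃), α ≫ j = f₁ ∧ q ≫ β = f₃ ∧ ψ = α⟦(1:ℤ)⟧' ≫ β := by
  refine ⟨?_, fun ⟨α, β, h⟩ ↦ ⟨F, j, q, hT, α, β, h⟩⟩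
  rintro ⟨F', j', q', hT', α', β', rfl, rfl, rfl⟩
  obtain ⟨e, hj, hq⟩ := exists_iso_of_distinguished_mor₂ hT hT'
  refine ⟨α' ≫ e.inv, e.hom⟦(1:ℤ)⟧' ≫ β', ?_, ?_, ?_⟩
  · rw [assoc, ← hj, e.inv_hom_id_assoc]
  · rw [← hq, assoc]
  · simp [← Functor.map_comp_assoc]

/-- The Toda bracket of the suspensions is the negative of the suspension of the Toda
bracket: `⟨Σf₃, Σf₂, Σf₁⟩ = −Σ⟨f₃, f₂, f₁⟩` as subsets of `T(Σ²X₀, ΣX₃)`; that is,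
`ψ ∈ ⟨f₃, f₂, f₁⟩` if and only if `−Σψ ∈ ⟨Σf₃, Σf₂, Σf₁⟩`. -/
theorem todaBracket_shift_neg {X₀ X₁ X₂ X₃ : C}
    (f₁ : X₀ ⟶ X₁) (f₂ : X₁ ⟶ X₂) (f₃ : X₂ ⟶ X₃) (ψ : X₀⟦(1:ℤ)⟧ ⟶ X₃) :
    ψ ∈ fcBracket f₁ f₂ f₃ ↔
      -(ψ⟦(1:ℤ)⟧') ∈ fcBracket (f₁⟦(1:ℤ)⟧') (f₂⟦(1:ℤ)⟧') (f₃⟦(1:ℤ)⟧') := by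
  obtain ⟨F, j, q, hT⟩ := distinguished_cocone_triangle₁ f₂
  have hT₁ : Triangle.mk (j⟦(1:ℤ)⟧') (f₂⟦(1:ℤ)⟧') (-(q⟦(1:ℤ)⟧')) ∈ distTriang C :=
    mk_shift_distinguished _ hT
  rw [mem_fcBracket_iff_of_distinguished hT, mem_fcBracket_iff_of_distinguished hT₁]
  constructor
  · rintro ⟨α, β, rfl, rfl, rfl⟩
    exact ⟨α⟦(1:ℤ)⟧', -(β⟦(1:ℤ)⟧'), by simp, by simp, by simp⟩
  · rintro ⟨α', β', hα, hβ, hψ⟩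
    obtain ⟨α, rfl⟩ := (shiftFunctor C (1:ℤ)).map_surjective α'
    obtain ⟨β, rfl⟩ := (shiftFunctor C (1:ℤ)).map_surjective β'
    refine ⟨α, -β, ?_, ?_, ?_⟩ <;> apply (shiftFunctor C (1:ℤ)).map_injective
    · simpa using hα
    · simpa using hβ
    · simpa [← neg_eq_iff_eq_neg] using hψ
end

section
/- In a triangulated category T with infinite products, let E be an object such that the graded ring E*E (with EⁿX := T(X, ΣⁿE)) is N-sparse for some N ≥ 2. If I is a retract of a product ∏ᵢ Σ^{nᵢ}E and E*I is N-sparse, then I is a retract of a product of the form ∏ᵢ Σ^{mᵢN}E. -/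
open CategoryTheory Category Limits

/-- In a triangulated (here: additive, shifted) category `T` with infinite products, if the
graded ring `E*E` (with `EⁿX := T(X, ΣⁿE)`) is `N`-sparse for some `N ≥ 2` and `I` is a
retract of a product `∏ᵢ Σ^{nᵢ}E` whose `E`-cohomology `E*I` is `N`-sparse, then `I` is a
retract of a product of the form `∏ᵢ Σ^{mᵢN}E`. -/
theorem retract_of_sparse_product {C : Type*} [Category C] [Preadditive C]
    [HasShift C ℤ] [HasProducts C]
    (E : C) (N : ℕ) (hN : 2 ≤ N)
    (hEE : ∀ n : ℤ, ¬ ((N : ℤ) ∣ n) → ∀ f : E ⟶ E⟦n⟧, f = 0)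
    {ι : Type _} (n : ι → ℤ) (I : C)
    (s : I ⟶ ∏ᶜ fun i => E⟦n i⟧) (r : (∏ᶜ fun i => E⟦n i⟧) ⟶ I)
    (hretract : s ≫ r = 𝟙 I)
    (hI : ∀ m : ℤ, ¬ ((N : ℤ) ∣ m) → ∀ f : I ⟶ E⟦m⟧, f = 0) :
    ∃ (κ : Type _) (m : κ → ℤ) (s' : I ⟶ ∏ᶜ fun j => E⟦(N : ℤ) * m j⟧)
      (r' : (∏ᶜ fun j => E⟦(N : ℤ) * m j⟧) ⟶ I), s' ≫ r' = 𝟙 I := by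
  set κ := {i : ι // (N : ℤ) ∣ n i} with hκ
  set m : κ → ℤ := fun j => n j.1 / N with hm
  have hobj : ∀ j : κ, E⟦n j.1⟧ = E⟦(N : ℤ) * m j⟧ := fun j => by
    rw [hm]
    exact congrArg (fun k => (shiftFunctor C k).obj E) (Int.mul_ediv_cancel' j.2).symm
  refine ⟨κ, m, Pi.lift (fun j => s ≫ Pi.π _ j.1 ≫ eqToHom (hobj j)),
    (Pi.lift (fun i : ι =>
      if h : (N : ℤ) ∣ n i then Pi.π _ (⟨i, h⟩ : κ) ≫ eqToHom (hobj ⟨i, h⟩).symm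
      else 0)) ≫ r, ?_⟩
  rw [← hretract, ← Category.assoc]
  congr 1
  ext i
  simp only [Category.assoc, limit.lift_π, Fan.mk_pt, Fan.mk_π_app]
  by_cases h : (N : ℤ) ∣ n i
  · rw [dif_pos h, limit.lift_π_assoc]
    simp
  · rw [dif_neg h, comp_zero]
    exact (hI (n i) h _).symm
end

section
/- In a triangulated category T with infinite products, let E be an object such that E*E is N-sparse, N ≥ 2. Let I be a retract of a product ∏ᵢ Σ^{mᵢN}E, and let W be an object such that E*W is N-sparse. Then T(W, ΣᵗI) = 0 for all integers t with t ≢ 0 (mod N). -/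
open CategoryTheory Category Limits

/-- In a triangulated (here: additive, shifted) category `T` with infinite products, let
`E` be such that `E*E` is `N`-sparse (`N ≥ 2`), `I` a retract of a product
`∏ᵢ Σ^{mᵢN}E`, and `W` an object with `E*W` `N`-sparse. Then `T(W, ΣᵗI) = 0` for all
`t ≢ 0 (mod N)`. -/
theorem hom_into_shifted_injective_zero {C : Type*} [Category C] [Preadditive C]
    [HasShift C ℤ] [HasProducts C]
    (E : C) (N : ℕ) (hN : 2 ≤ N)
    (hEE : ∀ n : ℤ, ¬ ((N : ℤ) ∣ n) → ∀ f : E ⟶ E⟦n⟧, f = 0)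
    {ι : Type _} (m : ι → ℤ) (I : C)
    (s : I ⟶ ∏ᶜ fun i => E⟦(N : ℤ) * m i⟧) (r : (∏ᶜ fun i => E⟦(N : ℤ) * m i⟧) ⟶ I)
    (hretract : s ≫ r = 𝟙 I)
    (W : C) (hW : ∀ n : ℤ, ¬ ((N : ℤ) ∣ n) → ∀ f : W ⟶ E⟦n⟧, f = 0)
    (t : ℤ) (ht : ¬ ((N : ℤ) ∣ t)) :
    ∀ f : W ⟶ I⟦t⟧, f = 0 := by
  intro f
  have hzero : f ≫ (shiftFunctor C t).map s = 0 := by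
    have hiso : IsIso (piComparison (shiftFunctor C t) fun i => E⟦(N : ℤ) * m i⟧) :=
      inferInstance
    rw [← cancel_mono (piComparison (shiftFunctor C t) fun i => E⟦(N : ℤ) * m i⟧)]
    apply Pi.hom_ext
    intro i
    have hdvd : ¬ ((N : ℤ) ∣ ((N : ℤ) * m i + t)) := by
      rintro ⟨k, hk⟩
      exact ht ⟨k - m i, by linarith⟩
    have h0 : (f ≫ (shiftFunctor C t).map s ≫
        (piComparison (shiftFunctor C t) fun i => E⟦(N : ℤ) * m i⟧) ≫
        Pi.π _ i) ≫ (shiftAdd E ((N : ℤ) * m i) t).inv = 0 :=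
      hW _ hdvd _
    have := h0 =≫ (shiftAdd E ((N : ℤ) * m i) t).hom
    simp only [assoc, Iso.inv_hom_id, comp_id, zero_comp] at this
    simpa using this
  calc f = f ≫ (shiftFunctor C t).map (s ≫ r) := by
        rw [hretract]; simp
    _ = (f ≫ (shiftFunctor C t).map s) ≫ (shiftFunctor C t).map r := by
        rw [Functor.map_comp, assoc]
    _ = 0 := by rw [hzero, zero_comp]
end

section
/- Let T be a triangulated category with coproducts and R a compact object of T. Let P be a retract of a coproduct of shifts of R (i.e., P belongs to the projective class generated by R). Then for every object Y, the natural map T(P, Y) → Hom_{π*R}(π*P, π*Y), sending f to the induced map on homotopy (πₙX := T(ΣⁿR, X)), is an isomorphism of abelian groups. -/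
open CategoryTheory Category Limits Opposite

variable {C : Type u} [Category.{v} C] [Preadditive C] [HasShift C ℤ]

/-- The right action of `r ∈ πₘR = T(ΣᵐR, R)` on `x ∈ πₙX = T(ΣⁿR, X)`, giving an
element of `π_{m+n}X`. -/
def piSMul (R X : C) (n m : ℤ) (x : R⟦n⟧ ⟶ X) (r : R⟦m⟧ ⟶ R) : R⟦m + n⟧ ⟶ X :=
  (shiftFunctorAdd C m n).hom.app R ≫ r⟦n⟧' ≫ x

/-- A degree-zero homomorphism of graded right `π*R`-modules `π*P → π*Y`: a family of
additive maps commuting with the right `π*R`-action. -/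
def IsPiModuleHom (R P Y : C) (φ : ∀ n : ℤ, (R⟦n⟧ ⟶ P) → (R⟦n⟧ ⟶ Y)) : Prop :=
  (∀ (n : ℤ) (x y : R⟦n⟧ ⟶ P), φ n (x + y) = φ n x + φ n y) ∧
  (∀ (n m : ℤ) (x : R⟦n⟧ ⟶ P) (r : R⟦m⟧ ⟶ R),
    φ (m + n) (piSMul R P n m x r) = piSMul R Y n m (φ n x) r)

lemma key_lemma {R P Y : C} {φ : ∀ n : ℤ, (R⟦n⟧ ⟶ P) → (R⟦n⟧ ⟶ Y)}
    (hφ : IsPiModuleHom R P Y φ) (k m : ℤ) (a : R⟦k⟧ ⟶ P) (u : R⟦m + k⟧ ⟶ R⟦k⟧) :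
    φ (m + k) (u ≫ a) = u ≫ φ k a := by
  set r' : R⟦m⟧ ⟶ R :=
    (shiftFunctor C k).preimage ((shiftFunctorAdd C m k).inv.app R ≫ u) with hr'
  have hmap : r'⟦k⟧' = (shiftFunctorAdd C m k).inv.app R ≫ u :=
    (shiftFunctor C k).map_preimage _
  have hP : piSMul R P k m a r' = u ≫ a := by rw [piSMul, hmap]; simp
  have hY : piSMul R Y k m (φ k a) r' = u ≫ φ k a := by rw [piSMul, hmap]; simp
  have := hφ.2 k m a r'
  rw [hP, hY] at this
  exact this

lemma factor_lemma [HasCoproducts.{v} C] (R : C)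
    [∀ J : Type v, PreservesColimitsOfShape (Discrete J) (coyoneda.obj (op R))]
    {ι : Type v} (A : ι → C) (n : ℤ) (y : R⟦n⟧ ⟶ ∐ A) :
    ∃ (i : ι) (u : R⟦n⟧ ⟶ A i), y = u ≫ Sigma.ι A i := by
  let adj := (shiftEquiv C n).toAdjunction
  let e : coyoneda.obj (op (R⟦n⟧)) ≅ (shiftEquiv C n).inverse ⋙ coyoneda.obj (op R) :=
    NatIso.ofComponents (fun X => Equiv.toIso (adj.homEquiv R X)) (by
      intro X Z f
      ext g
      exact adj.homEquiv_naturality_right g f)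
  have pres : PreservesColimitsOfShape (Discrete ι) (coyoneda.obj (op (R⟦n⟧))) :=
    preservesColimitsOfShape_of_natIso e.symm
  have hc := isColimitOfPreserves (coyoneda.obj (op (R⟦n⟧)))
    (colimit.isColimit (Discrete.functor A))
  obtain ⟨⟨i⟩, u, hu⟩ := Types.jointly_surjective _ hc y
  exact ⟨i, u, hu.symm⟩


/-- For `R` compact and `P` a retract of a coproduct of shifts of `R`, the natural map
`T(P, Y) → Hom_{π*R}(π*P, π*Y)`, `f ↦ (x ↦ x ≫ f)`, is an isomorphism of abelian
groups: it is additive, lands in the `π*R`-module homomorphisms, is injective, and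
every `π*R`-module homomorphism arises in this way. -/
theorem hom_iso_piModuleHom [HasCoproducts.{v} C] (R : C)
    [∀ J : Type v, PreservesColimitsOfShape (Discrete J) (coyoneda.obj (op R))]
    {ι : Type v} (d : ι → ℤ) (P : C)
    (s : P ⟶ ∐ fun i => R⟦d i⟧) (r : (∐ fun i => R⟦d i⟧) ⟶ P)
    (hretract : s ≫ r = 𝟙 P) (Y : C) :
    (∀ (f g : P ⟶ Y) (n : ℤ) (x : R⟦n⟧ ⟶ P), x ≫ (f + g) = x ≫ f + x ≫ g) ∧
    (∀ f : P ⟶ Y, IsPiModuleHom R P Y fun n x => x ≫ f) ∧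
    (∀ f g : P ⟶ Y, (∀ (n : ℤ) (x : R⟦n⟧ ⟶ P), x ≫ f = x ≫ g) → f = g) ∧
    (∀ φ : ∀ n : ℤ, (R⟦n⟧ ⟶ P) → (R⟦n⟧ ⟶ Y), IsPiModuleHom R P Y φ →
      ∃ f : P ⟶ Y, ∀ (n : ℤ) (x : R⟦n⟧ ⟶ P), φ n x = x ≫ f) := by
  refine ⟨fun f g n x => Preadditive.comp_add _ _ _ _ _ _, ?_, ?_, ?_⟩
  · intro f
    constructor
    · intro n x y; exact Preadditive.add_comp _ _ _ _ _ _
    · intro n m x r'; simp [piSMul]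
  · intro f g h
    have hr : r ≫ f = r ≫ g := by
      apply Sigma.hom_ext
      intro i
      have := h (d i) (Sigma.ι (fun i => R⟦d i⟧) i ≫ r)
      simpa using this
    calc f = (s ≫ r) ≫ f := by rw [hretract, id_comp]
    _ = s ≫ (r ≫ f) := by rw [assoc]
    _ = s ≫ (r ≫ g) := by rw [hr]
    _ = (s ≫ r) ≫ g := by rw [assoc]
    _ = g := by rw [hretract, id_comp]
  · intro φ hφ
    refine ⟨s ≫ Sigma.desc (fun i => φ (d i) (Sigma.ι (fun i => R⟦d i⟧) i ≫ r)), ?_⟩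
    intro n x
    obtain ⟨i, u, hu⟩ := factor_lemma R (fun i => R⟦d i⟧) n (x ≫ s)
    have hx : x = u ≫ (Sigma.ι (fun i => R⟦d i⟧) i ≫ r) := by
      rw [← assoc, ← hu, assoc, hretract, comp_id]
    obtain ⟨m, rfl⟩ : ∃ m, n = m + d i := ⟨n - d i, by omega⟩
    rw [hx, key_lemma hφ (d i) m, ← hx, ← assoc, hu]
    simp
end
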